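/- arXiv:2110.12169 — 2 statements merged into one kernel-verified Lean document; each statement's English description precedes it below -/
import Mathlib

section
/- Let n ≥ 2 and let W be a symmetric n×n real matrix with eigenvalues κ ∈ Γₖ⁺ for some 2 ≤ k ≤ n−1. If the k-th Newton tensor Tₖ(W) is a scalar multiple of the identity (equivalently, its tracefree part vanishes), then W = c·Id for some constant c > 0. -/
open Finset Matrix

/-- k-th elementary symmetric polynomial of κ ∈ ℝⁿ. -/
noncomputable def esymmVec (n k : ℕ) (κ : Fin n → ℝ) : ℝ :=
  ∑ s ∈ Finset.univ.powersetCard k, ∏ i ∈ s, κ i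

/-- Newton tensors: T₀ = Id, Tₘ = Hₘ·Id − W·T_{m−1}, where Hf m plays the role of Hₘ. -/
noncomputable def newtonT (n : ℕ) (W : Matrix (Fin n) (Fin n) ℝ) (Hf : ℕ → ℝ) :
    ℕ → Matrix (Fin n) (Fin n) ℝ
  | 0 => 1
  | (m + 1) => Hf (m + 1) • (1 : Matrix (Fin n) (Fin n) ℝ) - W * newtonT n W Hf m

/-- Frobenius inner product. -/
def finner {n : ℕ} (X Y : Matrix (Fin n) (Fin n) ℝ) : ℝ := ∑ i, ∑ j, X i j * Y i j

/-- Frobenius norm squared. -/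
def fnormSq {n : ℕ} (X : Matrix (Fin n) (Fin n) ℝ) : ℝ := finner X X

/-!
Conjugating by the eigenvector matrix, `Tₖ(W)` becomes the diagonal matrix with entries
`σₖ(κ|i)`, the `k`-th elementary symmetric function of the eigenvalues with `κᵢ` omitted.
If they all equal `α`, the trace gives `n α = (n - k) σₖ(κ)`, hence
`κᵢ σₖ₋₁(κ|i) = σₖ(κ) - α > 0`. A `κᵢ ≤ 0` is impossible in `Γₖ⁺`, since then
`σⱼ(κ|i) ≥ σⱼ(κ) > 0` for all `j < k` by induction. With all `κᵢ > 0`,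
`0 = σₖ(κ|i) - σₖ(κ|j) = (κⱼ - κᵢ) σₖ₋₁(κ|i,j)` and `σₖ₋₁(κ|i,j) > 0` as `k ≤ n - 1`.
-/

theorem Multiset.esymm_cons_succ {R : Type*} [CommSemiring R] (a : R) (s : Multiset R) (m : ℕ) :
    (a ::ₘ s).esymm (m + 1) = s.esymm (m + 1) + a * s.esymm m := by
  simp [Multiset.esymm, Multiset.map_map, Multiset.sum_map_mul_left]

section Esymm

variable {ι R : Type*}

noncomputable def esymmOn [CommSemiring R] (κ : ι → R) (s : Finset ι) (m : ℕ) : R :=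
  ∑ t ∈ s.powersetCard m, ∏ j ∈ t, κ j

theorem esymmOn_zero [CommSemiring R] (κ : ι → R) (s : Finset ι) : esymmOn κ s 0 = 1 := by
  simp [esymmOn]

theorem esymmOn_pos [CommSemiring R] [PartialOrder R] [IsStrictOrderedRing R] {κ : ι → R}
    {s : Finset ι} (hκ : ∀ i ∈ s, 0 < κ i) {m : ℕ} (hm : m ≤ #s) : 0 < esymmOn κ s m :=
  sum_pos (fun _ ht => prod_pos fun j hj => hκ j ((mem_powersetCard.1 ht).1 hj))
    (powersetCard_nonempty.2 hm)

variable [DecidableEq ι]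

theorem esymmOn_succ_of_mem [CommSemiring R] (κ : ι → R) {s : Finset ι} {i : ι} (hi : i ∈ s)
    (m : ℕ) :
    esymmOn κ s (m + 1) = esymmOn κ (s.erase i) (m + 1) + κ i * esymmOn κ (s.erase i) m := by
  simp only [esymmOn, ← esymm_map_val, erase_val, ← Multiset.esymm_cons_succ,
    ← Multiset.map_cons, Multiset.cons_erase hi]

variable [Fintype ι]

theorem sum_esymmOn_erase [CommSemiring R] (κ : ι → R) (k : ℕ) :
    ∑ i, esymmOn κ (univ.erase i) k = (Fintype.card ι - k) • esymmOn κ univ k := by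
  simp only [esymmOn, smul_sum]
  rw [sum_comm' (t' := univ.powersetCard k) (s' := fun t => tᶜ)]
  · refine sum_congr rfl fun t ht => ?_
    rw [sum_const, card_compl, (mem_powersetCard.1 ht).2]
  · intro i t
    simp [mem_powersetCard, subset_erase]

variable [CommRing R] [LinearOrder R] [IsStrictOrderedRing R] {κ : ι → R}

theorem esymmOn_erase_pos_of_nonpos {k : ℕ} (hΓ : ∀ j, 1 ≤ j → j ≤ k → 0 < esymmOn κ univ j)
    {i : ι} (hi : κ i ≤ 0) : ∀ j < k, 0 < esymmOn κ (univ.erase i) j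
  | 0, _ => by simp [esymmOn_zero]
  | j + 1, hj => by
    have hsplit := esymmOn_succ_of_mem κ (mem_univ i) j
    have ih := esymmOn_erase_pos_of_nonpos hΓ hi j (by omega)
    nlinarith [hΓ (j + 1) (by omega) (by omega)]

theorem lt_esymmOn_of_esymmOn_erase_eq {k : ℕ} (hk : 0 < k) (hkι : k ≤ Fintype.card ι)
    (hσ : 0 < esymmOn κ univ k) {α : R} (hα : ∀ i, esymmOn κ (univ.erase i) k = α) :
    α < esymmOn κ univ k := by
  have htrace := sum_esymmOn_erase κ k
  simp only [hα, sum_const, card_univ, nsmul_eq_mul, Nat.cast_sub hkι] at htrace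
  have hk' : (0 : R) < k := by exact_mod_cast hk
  nlinarith

theorem pos_of_esymmOn_erase_eq {m : ℕ} (hm : m + 1 ≤ Fintype.card ι)
    (hΓ : ∀ j, 1 ≤ j → j ≤ m + 1 → 0 < esymmOn κ univ j) {α : R}
    (hα : ∀ i, esymmOn κ (univ.erase i) (m + 1) = α) (i : ι) : 0 < κ i := by
  have hlt := lt_esymmOn_of_esymmOn_erase_eq m.succ_pos hm (hΓ _ le_add_self le_rfl) hα
  rw [esymmOn_succ_of_mem κ (mem_univ i), hα] at hlt
  by_contra! hi
  nlinarith [esymmOn_erase_pos_of_nonpos hΓ hi m m.lt_succ_self]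

theorem eq_of_esymmOn_erase_eq {m : ℕ} (hm : m + 2 ≤ Fintype.card ι) (hκ : ∀ i, 0 < κ i)
    {α : R} (hα : ∀ i, esymmOn κ (univ.erase i) (m + 1) = α) (i j : ι) : κ i = κ j := by
  rcases eq_or_ne i j with rfl | hij
  · rfl
  have hji : j ∈ univ.erase i := mem_erase.2 ⟨hij.symm, mem_univ j⟩
  have hij' : i ∈ univ.erase j := mem_erase.2 ⟨hij, mem_univ i⟩
  have hpos : 0 < esymmOn κ ((univ.erase i).erase j) m := by
    refine esymmOn_pos (fun l _ => hκ l) ?_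
    rw [card_erase_of_mem hji, card_erase_of_mem (mem_univ i), card_univ]
    omega
  have hi := esymmOn_succ_of_mem κ hji m
  have hj := esymmOn_succ_of_mem κ hij' m
  rw [erase_right_comm, hα] at hj
  rw [hα] at hi
  have : (κ j - κ i) * esymmOn κ ((univ.erase i).erase j) m = 0 := by linear_combination hj - hi
  exact (sub_eq_zero.1 ((mul_eq_zero.1 this).resolve_right hpos.ne')).symm

end Esymm

theorem newtonT_map {n : ℕ} {F : Type*}
    [FunLike F (Matrix (Fin n) (Fin n) ℝ) (Matrix (Fin n) (Fin n) ℝ)]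
    [AlgHomClass F ℝ (Matrix (Fin n) (Fin n) ℝ) (Matrix (Fin n) (Fin n) ℝ)] (f : F)
    (W : Matrix (Fin n) (Fin n) ℝ) (Hf : ℕ → ℝ) (m : ℕ) :
    newtonT n (f W) Hf m = f (newtonT n W Hf m) := by
  induction m with
  | zero => simp [newtonT]
  | succ m ih => simp [newtonT, ih]

theorem newtonT_diagonal {n : ℕ} (κ : Fin n → ℝ) (m : ℕ) :
    newtonT n (diagonal κ) (fun m => esymmVec n m κ) m =
      diagonal fun i => esymmOn κ (univ.erase i) m := by
  induction m with
  | zero => simp [newtonT, esymmOn_zero]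
  | succ m ih =>
    rw [newtonT, ih, diagonal_mul_diagonal, smul_one_eq_diagonal, diagonal_sub]
    congr 1
    funext i
    rw [esymmVec, ← esymmOn, esymmOn_succ_of_mem κ (mem_univ i), add_sub_cancel_right]

theorem newton_tensor_tracefree_umbilic_general (n k : ℕ) (hk1 : 2 ≤ k) (hk2 : k ≤ n - 1)
    (W : Matrix (Fin n) (Fin n) ℝ) (hW : W.IsHermitian)
    (hΓ : ∀ i, 1 ≤ i → i ≤ k → 0 < esymmVec n i hW.eigenvalues)
    (α : ℝ)
    (hT : newtonT n W (fun m => esymmVec n m hW.eigenvalues) k =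
      α • (1 : Matrix (Fin n) (Fin n) ℝ)) :
    ∃ c : ℝ, 0 < c ∧ W = c • (1 : Matrix (Fin n) (Fin n) ℝ) := by
  set κ := hW.eigenvalues
  set φ := Unitary.conjStarAlgAut ℝ _ hW.eigenvectorUnitary
  have hW' : W = φ (diagonal κ) := by
    simpa [Function.comp_def, -Unitary.conjStarAlgAut_apply] using hW.spectral_theorem
  have hdiag : diagonal (fun i => esymmOn κ (univ.erase i) k) = α • 1 := by
    apply EquivLike.injective φ
    rw [← newtonT_diagonal, ← newtonT_map, ← hW', hT, map_smul, map_one]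
  have hα : ∀ i, esymmOn κ (univ.erase i) k = α := fun i => by
    simpa using congrFun (congrFun hdiag i) i
  obtain ⟨m, rfl⟩ : ∃ m, k = m + 1 := ⟨k - 1, by omega⟩
  have hpos := pos_of_esymmOn_erase_eq (by rw [Fintype.card_fin]; omega) hΓ hα
  have hn0 : 0 < n := by omega
  refine ⟨κ ⟨0, hn0⟩, hpos _, ?_⟩
  have hconst : diagonal κ = κ ⟨0, hn0⟩ • 1 := by
    rw [smul_one_eq_diagonal]
    exact congrArg diagonal <| funext fun i =>
      eq_of_esymmOn_erase_eq (by rw [Fintype.card_fin]; omega) hpos hα i _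
  rw [hW', hconst, map_smul, map_one]

/-- If the k-th Newton tensor of a symmetric matrix with eigenvalues in Γₖ⁺ (2 ≤ k ≤ n−1)
is a scalar multiple of the identity, then W = c·Id with c > 0. -/
theorem newton_tensor_tracefree_umbilic (n k : ℕ) (hn : 2 ≤ n) (hk1 : 2 ≤ k) (hk2 : k ≤ n - 1)
    (W : Matrix (Fin n) (Fin n) ℝ) (hW : W.IsHermitian)
    (hΓ : ∀ i, 1 ≤ i → i ≤ k → 0 < esymmVec n i hW.eigenvalues)
    (α : ℝ)
    (hT : newtonT n W (fun m => esymmVec n m hW.eigenvalues) k =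
      α • (1 : Matrix (Fin n) (Fin n) ℝ)) :
    ∃ c : ℝ, 0 < c ∧ W = c • (1 : Matrix (Fin n) (Fin n) ℝ) :=
  newton_tensor_tracefree_umbilic_general n k hk1 hk2 W hW hΓ α hT
end

section
/- Let n ≥ 2, let g be the identity metric (standard inner product) on ℝⁿ, and let h be a positive semi-definite symmetric bilinear form on ℝⁿ with H = tr h. Then the symmetric bilinear form Ric defined by Ricᵢⱼ = H·hᵢⱼ − Σₖ hᵢₖhₖⱼ is positive semi-definite; and if h is positive definite and n ≥ 2 then Ric is positive definite. -/
/-!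
Diagonalizing `h = U diag(λ) Uᴴ` turns `(tr h) • h - h²` into `U diag(λᵢ ∑_{j ≠ i} λⱼ) Uᴴ`.
These diagonal entries are `≥ 0` when all `λⱼ ≥ 0`, and `> 0` when all `λⱼ > 0` and `n ≥ 2`.
-/

open Matrix Finset Unitary

section

variable {ι : Type*} [Fintype ι] [DecidableEq ι]

lemma mul_sum_sub_self_nonneg {μ : ι → ℝ} (hμ : ∀ j, 0 ≤ μ j) (i : ι) :
    0 ≤ μ i * (∑ j, μ j - μ i) := by
  rw [← sum_erase_eq_sub (mem_univ i)]
  exact mul_nonneg (hμ i) (sum_nonneg fun j _ => hμ j)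

lemma mul_sum_sub_self_pos [Nontrivial ι] {μ : ι → ℝ} (hμ : ∀ j, 0 < μ j) (i : ι) :
    0 < μ i * (∑ j, μ j - μ i) := by
  obtain ⟨j, hji⟩ := exists_ne i
  rw [← sum_erase_eq_sub (mem_univ i)]
  exact mul_pos (hμ i) (sum_pos (fun k _ => hμ k) ⟨j, mem_erase.mpr ⟨hji, mem_univ j⟩⟩)

namespace Matrix

theorem IsHermitian.trace_smul_sub_mul_self_eq {A : Matrix ι ι ℝ} (hA : A.IsHermitian) :
    A.trace • A - A * A = conjStarAlgAut ℝ _ hA.eigenvectorUnitary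
      (diagonal fun i => hA.eigenvalues i * (∑ j, hA.eigenvalues j - hA.eigenvalues i)) := by
  set D : Matrix ι ι ℝ := diagonal hA.eigenvalues
  have hAD : A = conjStarAlgAut ℝ _ hA.eigenvectorUnitary D := by
    simpa [D] using hA.spectral_theorem
  have htrace : A.trace = ∑ j, hA.eigenvalues j := by
    simpa using hA.trace_eq_sum_eigenvalues
  have hdiag : (∑ j, hA.eigenvalues j) • D - D * D =
      diagonal fun i => hA.eigenvalues i * (∑ j, hA.eigenvalues j - hA.eigenvalues i) := by
    rw [diagonal_mul_diagonal, ← diagonal_smul, diagonal_sub]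
    congr 1 with i
    simp only [Pi.smul_apply, smul_eq_mul]
    ring
  rw [← hdiag, map_sub, map_smul, map_mul, ← hAD, htrace]

theorem PosSemidef.trace_smul_sub_mul_self {A : Matrix ι ι ℝ} (hA : A.PosSemidef) :
    (A.trace • A - A * A).PosSemidef := by
  rw [hA.isHermitian.trace_smul_sub_mul_self_eq, conjStarAlgAut_apply,
    IsUnit.posSemidef_star_right_conjugate_iff isUnit_coe, posSemidef_diagonal_iff]
  exact mul_sum_sub_self_nonneg hA.eigenvalues_nonneg

theorem PosDef.trace_smul_sub_mul_self [Nontrivial ι] {A : Matrix ι ι ℝ} (hA : A.PosDef) :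
    (A.trace • A - A * A).PosDef := by
  rw [hA.isHermitian.trace_smul_sub_mul_self_eq, conjStarAlgAut_apply,
    IsUnit.posDef_star_right_conjugate_iff isUnit_coe]
  exact PosDef.diagonal (mul_sum_sub_self_pos hA.eigenvalues_pos)

end Matrix

end

/-- Gauss equation consequence: if h ⪰ 0 then (tr h)·h − h² ⪰ 0; and if h ≻ 0 and n ≥ 2
then (tr h)·h − h² ≻ 0. -/
theorem gauss_ricci_nonneg (n : ℕ) (hn : 2 ≤ n) (h : Matrix (Fin n) (Fin n) ℝ) :
    (h.PosSemidef → (h.trace • h - h * h).PosSemidef) ∧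
    (h.PosDef → (h.trace • h - h * h).PosDef) :=
  have : Nontrivial (Fin n) := Fin.nontrivial_iff_two_le.mpr hn
  ⟨PosSemidef.trace_smul_sub_mul_self, PosDef.trace_smul_sub_mul_self⟩
end
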